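/- With the notation of the ring construction C(R_n, k, t) and t ≥ k−1, the total weight satisfies w(C(R_n,k,t)) ≤ ⌈n/(2ℓ+2s+3)⌉ · (k−1 + ℓ(ℓ+1)), where s = t−k+1 and ℓ = ⌊√(t+1+s²+s)⌋−(s+1). In particular, when (2ℓ+2s+3) divides n, this weight equals the lower bound n(k−1+ℓ(ℓ+1))/(2ℓ+2s+3), so C(R_n,k,t) is an optimal (k,t)-dynamo. -/

import Mathlib

variable {V : Type*} [Fintype V]

/-- The degree of `v` in `G`. -/
noncomputable def deg (G : SimpleGraph V) (v : V) : ℕ := Nat.card {u | G.Adj v u}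

/-- One synchronous round of the irreversible threshold-`lam` rule: a node increments
its weight iff at least `⌈lam · d(v)⌉` of its neighbors have strictly larger weight. -/
noncomputable def step (G : SimpleGraph V) (lam : ℝ) (c : V → ℕ) : V → ℕ :=
  fun v => if ⌈lam * (deg G v : ℝ)⌉₊ ≤ Nat.card {u | G.Adj v u ∧ c v < c u}
    then c v + 1 else c v

/-- A `(k,t)`-simple-monotone configuration (Definition 3 of the paper), encoded by a
level function `X : V → ℤ` with values in `[-(t-k+1), k-1]`:  `X⁻¹(k-1) ≠ ∅`, the
initial weight of `v` is `max (X v) 0`, and every non-top node has at least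
`⌈lam · d(v)⌉` neighbors of strictly higher level. -/
def SimpleMonotone (G : SimpleGraph V) (lam : ℝ) (k t : ℕ) (c : V → ℕ) : Prop :=
  ∃ X : V → ℤ,
    (∀ v, -((t : ℤ) - k + 1) ≤ X v ∧ X v ≤ (k : ℤ) - 1) ∧
    (∃ v, X v = (k : ℤ) - 1) ∧
    (∀ v, (c v : ℤ) = max (X v) 0) ∧
    (∀ v, X v < (k : ℤ) - 1 →
      ⌈lam * (deg G v : ℝ)⌉₊ ≤ Nat.card {u | G.Adj v u ∧ X v < X u})

/-- The `n`-node ring on `ZMod n`. -/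
def ringGraph (n : ℕ) : SimpleGraph (ZMod n) :=
  SimpleGraph.fromRel (fun a b => b = a + 1)

/-- The `n × m` torus on `ZMod n × ZMod m`. -/
def torusGraph (n m : ℕ) : SimpleGraph (ZMod n × ZMod m) :=
  SimpleGraph.fromRel (fun a b => (a.1 = b.1 ∧ b.2 = a.2 + 1) ∨ (a.2 = b.2 ∧ b.1 = a.1 + 1))


section aux
open Finset

lemma sumHC (M : ℕ) : 2 * ∑ i ∈ range M, (M - i) = M * (M + 1) := by
  induction M with
  | zero => simp
  | succ N ih =>
    rw [Finset.sum_range_succ']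
    have h1 : ∀ i ∈ range N, (N + 1) - (i + 1) = N - i := by intro i _; omega
    rw [Finset.sum_congr rfl h1]
    have : (N+1) - 0 = N + 1 := by omega
    rw [this, Nat.mul_add, ih]
    ring

lemma sumHA (N q : ℕ) (h : q ≤ N) : 2 * ∑ i ∈ range N, (q - (i+1)) = q * (q - 1) := by
  have h0 : ∑ i ∈ range N, (q - (i+1)) = ∑ i ∈ range (q-1), ((q-1) - i) := by
    rw [← Finset.sum_subset (Finset.range_subset_range.2 (show q - 1 ≤ N by omega))
      (by intro i _ hi; simp only [mem_range] at hi ⊢; omega)]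
    apply Finset.sum_congr rfl
    intro i hi; simp only [mem_range] at hi; omega
  rw [h0, sumHC]
  cases q <;> simp <;> ring

lemma sumHB (N r : ℕ) : 2 * ∑ i ∈ range N, ((i+1) - r) = (N - r) * ((N - r) + 1) := by
  have h0 : ∑ i ∈ range N, ((i+1) - r) = ∑ i ∈ range N, ((N - r) - i) := by
    rw [← Finset.sum_range_reflect (fun i => (i+1) - r) N]
    apply Finset.sum_congr rfl
    intro i hi; simp only [mem_range] at hi; omega
  have h1 : ∑ i ∈ range N, ((N-r) - i) = ∑ i ∈ range (N-r), ((N-r) - i) :=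
    (Finset.sum_subset (Finset.range_subset_range.2 (by omega))
      (by intro i _ hi; simp only [mem_range] at hi ⊢; omega)).symm
  rw [h0, h1, sumHC]

lemma sumPER (m : ℕ) (g : ℕ → ℕ) (q : ℕ) :
    ∑ i ∈ range (m*q), g (i % m) = q * ∑ j ∈ range m, g j := by
  induction q with
  | zero => simp
  | succ q ih =>
    rw [Nat.mul_succ, Finset.sum_range_add, ih]
    have h1 : ∀ i ∈ range m, g ((m*q + i) % m) = g i := by
      intro i hi; simp only [mem_range] at hi
      rw [Nat.mul_add_mod, Nat.mod_eq_of_lt hi]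
    rw [Finset.sum_congr rfl h1]
    ring

lemma sumZMod (n : ℕ) [NeZero n] (f : ZMod n → ℕ) :
    ∑ v, f v = ∑ i ∈ range n, f (i : ZMod n) := by
  have hinj : ∀ a ∈ range n, ∀ b ∈ range n, ((a:ℕ) : ZMod n) = (b:ℕ) → a = b := by
    intro a ha b hb hab
    simp only [mem_range] at ha hb
    have := congrArg ZMod.val hab
    rwa [ZMod.val_natCast_of_lt ha, ZMod.val_natCast_of_lt hb] at this
  have himg : (range n).image (fun i => ((i:ℕ) : ZMod n)) = univ := by
    apply Finset.eq_univ_of_card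
    rw [Finset.card_image_of_injOn (fun a ha b hb => hinj a ha b hb), Finset.card_range, ZMod.card]
  rw [← himg, Finset.sum_image hinj]

section arith

lemma arithSV_int (k s L D m r x : ℤ) (hk : 2 ≤ k) (hs : 0 ≤ s) (hL : 0 ≤ L)
    (hr : 0 ≤ r) (hx : x ≤ s + r)
    (hD : D = (k-1) + L*(L+1)) (hm : m = 2*L+2*s+3)
    (h1 : L*(L+2*s+2) ≤ k-1) (h2 : k ≤ (L+1)*(L+2*s+3)) :
    2*D*x + m*(L*(L+1)) ≤ m*(r*(r-1)) + 2*D*(s+L+1) := by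
  have hDpos : 0 < D := by nlinarith
  have hmono : 2*D*x ≤ 2*D*(s+r) := by nlinarith
  have hmain : 2*D*(s+r) + m*(L*(L+1)) ≤ m*(r*(r-1)) + 2*D*(s+L+1) := by
    -- ⟺ (r - L - 1) * (m*(r+L) - 2*D) ≥ 0
    have hiden : m*(r*(r-1)) + 2*D*(s+L+1) - (2*D*(s+r) + m*(L*(L+1)))
        = (r - L - 1) * (m*(r+L) - 2*D) := by ring
    have hkey : 0 ≤ (r - L - 1) * (m*(r+L) - 2*D) := by
      rcases le_or_gt r L with hcase | hcase
      · have ha : 0 ≤ L + 1 - r := by omega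
        have hb : 0 ≤ 2*D - m*(r+L) := by nlinarith
        nlinarith [mul_nonneg ha hb]
      · rcases eq_or_lt_of_le (show L + 1 ≤ r by omega) with hcase2 | hcase2
        · rw [← hcase2]; ring_nf; nlinarith
        · have ha : 1 ≤ r - L - 1 := by omega
          have hb : 0 ≤ m*(r+L) - 2*D := by nlinarith
          nlinarith [mul_nonneg (by omega : (0:ℤ) ≤ r - L - 1) hb]
    omega
  omega

lemma arithFIN (k s L : ℕ) (hk : 2 ≤ k)
    (h1 : L*(L+2*s+2) ≤ k-1) (h2 : k ≤ (L+1)*(L+2*s+3)) (A B : ℕ) :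
    2*(A+B+1)*((k-1) + L*(L+1)) ≤
      2*((2*L+2*s+3)*(k-1)) + (2*L+2*s+3)*((A-s)*((A-s)-1))
        + (2*L+2*s+3)*((B-s)*((B-s)-1)) := by
  have h1' : (L:ℤ)*(L+2*s+2) ≤ (k:ℤ)-1 := by
    have h' : ((L*(L+2*s+2) : ℕ) : ℤ) ≤ ((k-1 : ℕ) : ℤ) := by exact_mod_cast h1
    rw [Nat.cast_sub (by omega : 1 ≤ k)] at h'
    push_cast at h'
    linarith
  have h2' : (k:ℤ) ≤ ((L:ℤ)+1)*(L+2*s+3) := by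
    have h' : ((k:ℕ):ℤ) ≤ (((L+1)*(L+2*s+3) : ℕ) : ℤ) := by exact_mod_cast h2
    push_cast at h'
    linarith
  have hprod : ∀ C : ℕ, ∃ r : ℤ, 0 ≤ r ∧ (C:ℤ) ≤ s + r ∧
      (((C-s)*((C-s)-1) : ℕ) : ℤ) = r*(r-1) := by
    intro C
    rcases Nat.lt_or_ge C (s+1) with hCs | hCs
    · refine ⟨0, le_refl _, by omega, ?_⟩
      have hz : C - s = 0 := by omega
      rw [hz]
      simp
    · have hCs' : s ≤ C := by omega
      refine ⟨(C:ℤ) - (s:ℤ), by omega, by omega, ?_⟩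
      rcases Nat.eq_or_lt_of_le hCs' with h | h
      · rw [← h]
        simp
      · have hC1 : 1 ≤ C - s := by omega
        push_cast [Nat.cast_sub hCs', Nat.cast_sub hC1]
        ring
  obtain ⟨rA, hrA0, hrAle, hrAeq⟩ := hprod A
  obtain ⟨rB, hrB0, hrBle, hrBeq⟩ := hprod B
  have hkZ : (2:ℤ) ≤ (k:ℤ) := by exact_mod_cast hk
  have svA := arithSV_int k s L (((k:ℤ)-1) + L*(L+1)) (2*(L:ℤ)+2*s+3) rA A hkZ
    (by positivity) (by positivity) hrA0 hrAle rfl rfl h1' h2'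
  have svB := arithSV_int k s L (((k:ℤ)-1) + L*(L+1)) (2*(L:ℤ)+2*s+3) rB B hkZ
    (by positivity) (by positivity) hrB0 hrBle rfl rfl h1' h2'
  set PA : ℕ := (A-s)*((A-s)-1) with hPAdef
  set PB : ℕ := (B-s)*((B-s)-1) with hPBdef
  zify [show 1 ≤ k from by omega]
  rw [hrAeq, hrBeq]
  nlinarith [svA, svB]

end arith

-- the weight pattern of C(R_n,k,t)
def patt (k s L : ℕ) (j : ℕ) : ℕ :=
  if j = 0 then k - 1 else if j ≤ L+s+1 then (L+1) - j else j - (L+2*s+2)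

lemma patt_sum (k s L : ℕ) :
    ∑ j ∈ range (2*L+2*s+3), patt k s L j = (k-1) + L*(L+1) := by
  have hsplit : (2*L+2*s+3) = (L+s+2) + (L+s+1) := by ring
  rw [hsplit, Finset.sum_range_add]
  have hfirst : ∑ i ∈ range (L+s+2), patt k s L i = (k-1) + ∑ i ∈ range (L+s+1), ((L+1) - (i+1)) := by
    rw [Finset.sum_range_succ']
    have h1 : ∀ i ∈ range (L+s+1), patt k s L (i+1) = (L+1) - (i+1) := by
      intro i hi
      simp only [mem_range] at hi
      rw [patt, if_neg (by omega), if_pos (by omega)]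
    rw [Finset.sum_congr rfl h1, patt, if_pos rfl]
    ring
  have hsecond : ∑ i ∈ range (L+s+1), patt k s L ((L+s+2) + i)
      = ∑ i ∈ range (L+s+1), ((i+1) - (s+1)) := by
    apply Finset.sum_congr rfl
    intro i hi
    simp only [mem_range] at hi
    rw [patt, if_neg (by omega), if_neg (by omega)]
    omega
  rw [hfirst, hsecond]
  have hA := sumHA (L+s+1) (L+1) (by omega)
  have hB := sumHB (L+s+1) (s+1)
  have hBval : (L+s+1) - (s+1) = L := by omega
  rw [hBval] at hB
  have h3 : (L+1)*((L+1)-1) = (L+1)*L := by simp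
  rw [h3] at hA
  apply Nat.eq_of_mul_eq_mul_left (show 0 < 2 by norm_num)
  calc 2 * ((k-1) + ∑ i ∈ range (L+s+1), ((L+1) - (i+1))
        + ∑ i ∈ range (L+s+1), ((i+1) - (s+1)))
      = 2*(k-1) + 2 * ∑ i ∈ range (L+s+1), ((L+1) - (i+1))
        + 2 * ∑ i ∈ range (L+s+1), ((i+1) - (s+1)) := by ring
    _ = 2*(k-1) + (L+1)*L + L*(L+1) := by rw [hA, hB]
    _ = 2 * ((k-1) + L*(L+1)) := by ring

lemma sum_mod_le (g : ℕ → ℕ) (n m : ℕ) (hm : 0 < m) :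
    ∑ i ∈ range n, g (i % m) ≤ ((n + m - 1)/m) * ∑ j ∈ range m, g j := by
  have hq : n ≤ m * ((n + m - 1)/m) := by
    have h1 := Nat.div_add_mod (n + m - 1) m
    have h2 : (n + m - 1) % m < m := Nat.mod_lt _ hm
    omega
  calc ∑ i ∈ range n, g (i % m) ≤ ∑ i ∈ range (m * ((n + m - 1)/m)), g (i % m) :=
        Finset.sum_le_sum_of_subset (Finset.range_subset_range.2 hq)
    _ = ((n + m - 1)/m) * ∑ j ∈ range m, g j := sumPER _ _ _

section ring
variable {n : ℕ} [NeZero n]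

lemma ring_adj (hn : 3 ≤ n) (v u : ZMod n) :
    (ringGraph n).Adj v u ↔ (u = v + 1 ∨ u = v - 1) := by
  have h1 : (1 : ZMod n) ≠ 0 := by
    intro h
    rw [show ((1:ZMod n)) = ((1:ℕ) : ZMod n) by norm_cast,
      ZMod.natCast_eq_zero_iff] at h
    exact absurd (Nat.le_of_dvd one_pos h) (by omega)
  constructor
  · rintro ⟨hne, h | h⟩
    · exact Or.inl h
    · exact Or.inr (by rw [h]; ring)
  · rintro (h | h) <;> subst h
    · exact ⟨fun hh => h1 (left_eq_add.mp hh), Or.inl rfl⟩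
    · refine ⟨fun hh => h1 ?_, Or.inr (by ring)⟩
      have h2 : v + 1 = v := by nth_rewrite 1 [hh]; ring
      exact left_eq_add.mp h2.symm

lemma ring_deg (hn : 3 ≤ n) (v : ZMod n) : deg (ringGraph n) v = 2 := by
  have hset : {u | (ringGraph n).Adj v u} = {v + 1, v - 1} := by
    ext u; simp only [Set.mem_setOf_eq, Set.mem_insert_iff, Set.mem_singleton_iff, ring_adj hn]
  have hne : v + 1 ≠ v - 1 := by
    intro h
    have h2 : ((2:ℕ) : ZMod n) = 0 := by
      have h0 : (v + 1) - (v - 1) = 0 := by rw [h]; ring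
      calc ((2:ℕ) : ZMod n) = (v+1) - (v-1) := by push_cast; ring
        _ = 0 := h0
    rw [ZMod.natCast_eq_zero_iff] at h2
    exact absurd (Nat.le_of_dvd two_pos h2) (by omega)
  rw [deg, hset, Nat.card_coe_set_eq, Set.ncard_pair hne]

lemma step_witness (hn : 3 ≤ n) {c : ZMod n → ℕ} {v : ZMod n}
    (h : step (ringGraph n) (1/2) c v ≠ c v) :
    ∃ u, (u = v + 1 ∨ u = v - 1) ∧ c v < c u := by
  rw [step] at h
  split_ifs at h with hcond
  · rw [ring_deg hn] at hcond
    norm_num at hcond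
    have hpos : 0 < Nat.card {u | (ringGraph n).Adj v u ∧ c v < c u} := hcond
    rw [Nat.card_pos_iff] at hpos
    obtain ⟨⟨u, hu⟩, -⟩ := hpos
    exact ⟨u, (ring_adj hn v u).1 hu.1, hu.2⟩
  · exact absurd rfl h

omit [NeZero n] in
lemma step_ge (c : ZMod n → ℕ) (v) : c v ≤ step (ringGraph n) (1/2) c v := by
  rw [step]; split_ifs <;> omega

omit [NeZero n] in
lemma step_le (c : ZMod n → ℕ) (v) : step (ringGraph n) (1/2) c v ≤ c v + 1 := by
  rw [step]; split_ifs <;> omega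

end ring


section chain
variable {n k t : ℕ} [NeZero n] {c' : ZMod n → ℕ}

/-- iterated configuration -/
noncomputable def cj (c' : ZMod n → ℕ) (j : ℕ) : ZMod n → ℕ := (step (ringGraph n) (1/2))^[j] c'

lemma cj_succ (j : ℕ) (v : ZMod n) :
    cj c' (j+1) v = step (ringGraph n) (1/2) (cj c' j) v := by
  rw [cj, Function.iterate_succ_apply', cj]

lemma cj_mono {j j' : ℕ} (h : j ≤ j') (v : ZMod n) : cj c' j v ≤ cj c' j' v := by
  induction j' with
  | zero => simp_all
  | succ j' ih =>
    rcases Nat.lt_or_ge j (j'+1) with h' | h'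
    · exact le_trans (ih (by omega)) (by rw [cj_succ]; exact step_ge _ _)
    · have : j = j' + 1 := by omega
      subst this; rfl

lemma cj_lip (j d : ℕ) (v : ZMod n) : cj c' (j + d) v ≤ cj c' j v + d := by
  induction d with
  | zero => simp
  | succ d ih =>
    have := step_le (n := n) (cj c' (j+d)) v
    rw [← cj_succ] at this
    calc cj c' (j + (d+1)) v = cj c' ((j + d) + 1) v := by ring_nf
      _ ≤ cj c' (j+d) v + 1 := this
      _ ≤ cj c' j v + d + 1 := by omega

variable (hn : 3 ≤ n) (hk : 2 ≤ k)
  (hdyn : ∀ v, (step (ringGraph n) (1/2))^[t] c' v = k - 1)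

include hn hk hdyn in
lemma chain_lemma : ∀ τ, τ ≤ t → ∀ x : ZMod n, cj c' τ x = k - 1 →
    ∃ ε : ZMod n, (ε = 1 ∨ ε = -1) ∧ ∃ p : ℕ, p ≤ τ ∧
      c' (x + ε * (p : ℕ)) = k - 1 ∧
      (∀ i < p, c' (x + ε * (i : ℕ)) ≠ k - 1) ∧
      (∀ i ≤ p, ((k:ℤ) - 1 - τ + i) ≤ (c' (x + ε * (i : ℕ)) : ℤ)) := by
  have hcap : ∀ j ≤ t, ∀ v, cj c' j v ≤ k - 1 := by
    intro j hj v
    calc cj c' j v ≤ cj c' t v := cj_mono hj v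
      _ = k - 1 := hdyn v
  intro τ
  induction τ using Nat.strong_induction_on with
  | _ τ IH =>
    intro hτt x hx
    by_cases hx0 : c' x = k - 1
    · refine ⟨1, Or.inl rfl, 0, Nat.zero_le _, by simpa using hx0, by omega, ?_⟩
      intro i hi
      have hi0 : i = 0 := by omega
      subst hi0
      have hcx : (c' x : ℤ) = (k:ℤ) - 1 := by
        rw [hx0]; push_cast [Nat.cast_sub (by omega : 1 ≤ k)]; ring
      simp only [Nat.cast_zero, mul_zero, add_zero, hcx]
      omega
    · have hex : ∃ j, cj c' j x = k - 1 := ⟨τ, hx⟩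
      set τ₀ := Nat.find hex with hτ₀def
      have hτ₀spec : cj c' τ₀ x = k - 1 := Nat.find_spec hex
      have hτ₀le : τ₀ ≤ τ := Nat.find_le hx
      have hτ₀pos : τ₀ ≠ 0 := by
        intro h
        rw [h] at hτ₀spec
        exact hx0 hτ₀spec
      have hmin : cj c' (τ₀ - 1) x ≠ k - 1 := Nat.find_min hex (by omega)
      have hstep : cj c' τ₀ x = step (ringGraph n) (1/2) (cj c' (τ₀-1)) x := by
        rw [← cj_succ]
        congr 1
        omega
      have hne : step (ringGraph n) (1/2) (cj c' (τ₀-1)) x ≠ cj c' (τ₀-1) x := by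
        rw [← hstep, hτ₀spec]
        exact fun h => hmin h.symm
      obtain ⟨u, hu, hlt⟩ := step_witness hn hne
      -- value facts
      have hlipx : cj c' τ₀ x ≤ cj c' (τ₀ - 1) x + 1 := by
        have := cj_lip (c' := c') (τ₀ - 1) 1 x
        rw [show τ₀ - 1 + 1 = τ₀ by omega] at this
        omega
      have hcapu : cj c' (τ₀-1) u ≤ k - 1 := hcap _ (by omega) u
      have huval : cj c' (τ₀-1) u = k - 1 := by omega
      have hxval : cj c' (τ₀-1) x + 1 = k - 1 := by
        have hcx : cj c' (τ₀-1) x ≤ k - 1 := hcap _ (by omega) x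
        omega
      -- direction
      obtain ⟨ε₁, hε₁or, hueq⟩ : ∃ ε₁ : ZMod n, (ε₁ = 1 ∨ ε₁ = -1) ∧ u = x + ε₁ := by
        rcases hu with h | h
        · exact ⟨1, Or.inl rfl, h⟩
        · exact ⟨-1, Or.inr rfl, by rw [h]; ring⟩
      obtain ⟨ε', hε'or, p', hp'le, hend, hmid, hlb⟩ :=
        IH (τ₀ - 1) (by omega) (by omega) u huval
      -- prelim bound on c' x
      have hc'x : ((k:ℤ) - 1 - τ : ℤ) ≤ (c' x : ℤ) := by
        have h1 : cj c' (τ₀ - 1) x ≤ cj c' 0 x + (τ₀ - 1) := by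
          have := cj_lip (c' := c') 0 (τ₀ - 1) x
          simpa using this
        have h0 : cj c' 0 x = c' x := rfl
        rw [h0] at h1
        have hk1 : (1:ℕ) ≤ k - 1 := by omega
        -- cj (τ₀-1) x = k - 2
        zify at hxval h1
        omega
      by_cases hp'0 : p' = 0
      -- one-step chain
      · subst hp'0
        refine ⟨ε₁, hε₁or, 1, by omega, ?_, ?_, ?_⟩
        · simpa [← hueq] using hend
        · intro i hi
          have : i = 0 := by omega
          subst this
          simpa using hx0
        · intro i hi
          interval_cases i
          · simpa using hc'x
          · have : c' (x + ε₁ * ((1:ℕ):ZMod n)) = k - 1 := by simpa [← hueq] using hend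
            rw [this]
            push_cast
            omega
      · have hdir : ε' = ε₁ ∨ ε' = -ε₁ := by
          rcases hε'or with h | h <;> rcases hε₁or with h1 | h1 <;> subst h <;> rw [h1]
          · left; rfl
          · right; rw [neg_neg]
          · right; rfl
          · left; rfl
        have hkey : ∀ i : ℕ, u + ε' * (i:ℕ) = x + ε₁ + ε' * (i : ℕ) := by
          intro i; rw [hueq]
        rcases hdir with hsame | hopp
        · -- same direction: prepend
          subst hsame
          refine ⟨ε', hε'or, p' + 1, by omega, ?_, ?_, ?_⟩
          · have : x + ε' * ((p' + 1 : ℕ) : ZMod n) = u + ε' * (p' : ℕ) := by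
              rw [hueq]; push_cast; ring
            rw [this]; exact hend
          · intro i hi
            cases i with
            | zero => simpa using hx0
            | succ j =>
              have : x + ε' * ((j + 1 : ℕ) : ZMod n) = u + ε' * (j : ℕ) := by
                rw [hueq]; push_cast; ring
              rw [this]
              exact hmid j (by omega)
          · intro i hi
            cases i with
            | zero => simpa using hc'x
            | succ j =>
              have heq : x + ε' * ((j + 1 : ℕ) : ZMod n) = u + ε' * (j : ℕ) := by
                rw [hueq]; push_cast; ring
              rw [heq]
              have := hlb j (by omega)
              have hτ' : ((τ₀ - 1 : ℕ) : ℤ) = (τ₀ : ℤ) - 1 := by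
                push_cast [Nat.cast_sub (by omega : 1 ≤ τ₀)]; ring
              push_cast at this ⊢
              omega
        · -- opposite direction: restrict
          subst hopp
          by_cases hp'1 : p' = 1
          · exfalso
            apply hx0
            have : u + (-ε₁) * ((p' : ℕ) : ZMod n) = x := by
              rw [hueq, hp'1]; push_cast; ring
            rw [← this]
            exact hend
          · refine ⟨-ε₁, by rcases hε₁or with h | h <;> subst h <;> simp, p' - 1, by omega, ?_, ?_, ?_⟩
            · have : x + (-ε₁) * ((p' - 1 : ℕ) : ZMod n) = u + (-ε₁) * (p' : ℕ) := by
                rw [hueq]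
                push_cast [Nat.cast_sub (by omega : 1 ≤ p')]
                ring
              rw [this]; exact hend
            · intro i hi
              have : x + (-ε₁) * ((i : ℕ) : ZMod n) = u + (-ε₁) * ((i + 1 : ℕ) : ZMod n) := by
                rw [hueq]; push_cast; ring
              rw [this]
              exact hmid (i+1) (by omega)
            · intro i hi
              have heq : x + (-ε₁) * ((i : ℕ) : ZMod n) = u + (-ε₁) * ((i + 1 : ℕ) : ZMod n) := by
                rw [hueq]; push_cast; ring
              rw [heq]
              have := hlb (i+1) (by omega)
              have hτ' : ((τ₀ - 1 : ℕ) : ℤ) = (τ₀ : ℤ) - 1 := by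
                push_cast [Nat.cast_sub (by omega : 1 ≤ τ₀)]; ring
              push_cast at this ⊢
              omega

end chain

end aux

section lower
open Finset

variable {n k t s L : ℕ} [NeZero n] {c' : ZMod n → ℕ}

lemma zval (w : ZMod n) : ((w.val : ℕ) : ZMod n) = w := by
  rw [ZMod.natCast_val, ZMod.cast_id]

lemma lower_bound (hn : 3 ≤ n) (hk : 2 ≤ k) (htk : k - 1 ≤ t) (hs : t + 1 ≤ s + k)
    (h1 : L*(L+2*s+2) ≤ k-1) (h2 : k ≤ (L+1)*(L+2*s+3))
    (hle : ∀ v, c' v ≤ k - 1)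
    (hdyn : ∀ v, (step (ringGraph n) (1/2))^[t] c' v = k - 1) :
    2 * ((k-1) + L*(L+1)) * n ≤ 2 * (2*L+2*s+3) * ∑ v, c' v := by
  classical
  have hsZ : (t:ℤ) - k + 1 ≤ (s:ℤ) := by
    clear h1 h2 hle hdyn
    omega
  -- the chain lemma, specialized
  have hchain : ∀ x : ZMod n, ∃ ε : ZMod n, (ε = 1 ∨ ε = -1) ∧ ∃ p : ℕ, p ≤ t ∧
      c' (x + ε * (p : ℕ)) = k - 1 ∧
      (∀ i < p, c' (x + ε * (i : ℕ)) ≠ k - 1) ∧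
      (∀ i ≤ p, ((i:ℤ) - s) ≤ (c' (x + ε * (i : ℕ)) : ℤ)) := by
    intro x
    obtain ⟨ε, hεor, p, hp, hend, hmid, hlb⟩ :=
      chain_lemma hn hk hdyn t le_rfl x (hdyn x)
    exact ⟨ε, hεor, p, hp, hend, hmid, fun i hi => by
      have := hlb i hi; omega⟩
  -- seeds exist
  have hSne : ∃ z : ZMod n, c' z = k - 1 := by
    obtain ⟨ε, _, p, _, hend, _, _⟩ := hchain 0
    exact ⟨_, hend⟩
  obtain ⟨z, hz⟩ := hSne
  set S : Finset (ZMod n) := univ.filter (fun v => c' v = k - 1) with hSdef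
  -- gap length
  have hGex : ∀ y : ZMod n, ∃ d : ℕ, c' (y + ((d+1 : ℕ) : ZMod n)) = k - 1 := by
    intro y
    refine ⟨(z - y - 1).val, ?_⟩
    have hc : (((z - y - 1).val + 1 : ℕ) : ZMod n) = z - y := by
      push_cast [zval]
      ring
    rw [hc, show y + (z - y) = z by ring]
    exact hz
  set G : ZMod n → ℕ := fun y => Nat.find (hGex y) + 1 with hGdef
  have hGval : ∀ y, G y = Nat.find (hGex y) + 1 := fun _ => rfl
  have hGpos : ∀ y, 1 ≤ G y := fun y => by rw [hGval]; omega
  have hGspec : ∀ y, c' (y + ((G y : ℕ) : ZMod n)) = k - 1 := fun y => Nat.find_spec (hGex y)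
  have hGmin : ∀ y e, 1 ≤ e → e < G y → c' (y + ((e : ℕ) : ZMod n)) ≠ k - 1 := by
    intro y e he1 heG
    have := Nat.find_min (hGex y) (show e - 1 < Nat.find (hGex y) by have := hGval y; omega)
    have hee : e - 1 + 1 = e := by omega
    rwa [hee] at this
  have hGlen : ∀ y, G y ≤ n := by
    intro y
    have hfind : Nat.find (hGex y) ≤ (z - y - 1).val := by
      apply Nat.find_le
      have hc : (((z - y - 1).val + 1 : ℕ) : ZMod n) = z - y := by
        push_cast [zval]; ring
      rw [hc, show y + (z - y) = z by ring]
      exact hz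
    have := ZMod.val_lt (z - y - 1)
    have := hGval y
    omega
  -- sigma
  have hσex : ∀ u : ZMod n, ∃ d : ℕ, c' (u - ((d:ℕ) : ZMod n)) = k - 1 := by
    intro u
    refine ⟨(u - z).val, ?_⟩
    rw [zval, show u - (u - z) = z by ring]
    exact hz
  set σ : ZMod n → ℕ := fun u => Nat.find (hσex u) with hσdef
  have hσspec : ∀ u, c' (u - ((σ u : ℕ) : ZMod n)) = k - 1 := fun u => Nat.find_spec (hσex u)
  have hσmin : ∀ u d, d < σ u → c' (u - ((d:ℕ) : ZMod n)) ≠ k - 1 :=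
    fun u d hd => Nat.find_min (hσex u) hd
  set key : ZMod n → ZMod n := fun u => u - ((σ u : ℕ) : ZMod n) with hkeydef
  have hkeyS : ∀ u ∈ (univ : Finset (ZMod n)), key u ∈ S := by
    intro u _
    simp only [hSdef, mem_filter, mem_univ, true_and]
    exact hσspec u
  -- fibers
  have hfiber : ∀ y ∈ S, univ.filter (fun u => key u = y)
      = (range (G y)).image (fun j => y + ((j:ℕ) : ZMod n)) := by
    intro y hy
    have hyval : c' y = k - 1 := by simpa [hSdef, mem_filter] using hy
    ext u
    simp only [mem_filter, mem_univ, true_and, mem_image, mem_range]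
    constructor
    · intro hu
      have hueq : u = y + ((σ u : ℕ) : ZMod n) := by
        rw [← hu, hkeydef]; ring
      set du := σ u with hdu
      refine ⟨du, ?_, hueq.symm⟩
      by_contra hge
      push_neg at hge
      have he : du - G y < du := by
        have := hGpos y
        omega
      apply hσmin u (du - G y) he
      have hcast : u - (((du - G y : ℕ)) : ZMod n) = y + ((G y : ℕ) : ZMod n) := by
        rw [hueq]
        push_cast [Nat.cast_sub (show G y ≤ du by omega)]
        ring
      rw [hcast]
      exact hGspec y
    · rintro ⟨j, hj, rfl⟩
      have hσle : σ (y + ((j:ℕ) : ZMod n)) ≤ j := by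
        apply Nat.find_le
        rw [show y + ((j:ℕ) : ZMod n) - ((j:ℕ) : ZMod n) = y by ring]
        exact hyval
      have hσge : ¬ (σ (y + ((j:ℕ) : ZMod n)) < j) := by
        intro hlt
        set d := σ (y + ((j:ℕ) : ZMod n)) with hd
        apply hGmin y (j - d) (by omega) (by omega)
        have hcast : y + ((j:ℕ) : ZMod n) - ((d:ℕ) : ZMod n) = y + (((j - d : ℕ)) : ZMod n) := by
          push_cast [Nat.cast_sub (show d ≤ j by omega)]
          ring
        rw [← hcast]
        exact hσspec _
      have hσeq : σ (y + ((j:ℕ) : ZMod n)) = j := by omega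
      rw [hkeydef]
      simp only
      rw [hσeq]
      ring
  -- injectivity on range (G y)
  have hinj : ∀ y, ∀ j1 ∈ range (G y), ∀ j2 ∈ range (G y),
      y + ((j1:ℕ) : ZMod n) = y + ((j2:ℕ) : ZMod n) → j1 = j2 := by
    intro y j1 h1' j2 h2' heq
    simp only [mem_range] at h1' h2'
    have := add_left_cancel heq
    have hval := congrArg ZMod.val this
    rwa [ZMod.val_natCast_of_lt (by have := hGlen y; omega),
      ZMod.val_natCast_of_lt (by have := hGlen y; omega)] at hval
  -- grouping for c' and for 1
  have hgroup : ∑ y ∈ S, ∑ j ∈ range (G y), c' (y + ((j:ℕ) : ZMod n)) = ∑ v, c' v := by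
    rw [← Finset.sum_fiberwise_of_maps_to hkeyS c']
    apply Finset.sum_congr rfl
    intro y hy
    rw [hfiber y hy, Finset.sum_image (hinj y)]
  have hcard : ∑ y ∈ S, G y = n := by
    have h0 : ∑ y ∈ S, ∑ _j ∈ range (G y), 1 = ∑ _v : ZMod n, 1 := by
      rw [← Finset.sum_fiberwise_of_maps_to hkeyS (fun _ => 1)]
      apply Finset.sum_congr rfl
      intro y hy
      rw [hfiber y hy, Finset.sum_image (hinj y)]
    simpa [ZMod.card] using h0
  -- per-gap bound
  have hgap : ∀ y ∈ S, 2 * ((k-1) + L*(L+1)) * G y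
      ≤ 2 * (2*L+2*s+3) * ∑ j ∈ range (G y), c' (y + ((j:ℕ) : ZMod n)) := by
    intro y hy
    have hyval : c' y = k - 1 := by simpa [hSdef, mem_filter] using hy
    have hGy1 : 1 ≤ G y := hGpos y
    -- dichotomy via chains
    have hdich : ∀ j, 1 ≤ j → j < G y →
        (∀ δ, 1 ≤ δ → δ ≤ j → ((j:ℤ) - δ - s ≤ (c' (y + ((δ:ℕ) : ZMod n)) : ℤ))) ∨
        (∀ δ, j ≤ δ → δ ≤ G y - 1 → ((δ:ℤ) - j - s ≤ (c' (y + ((δ:ℕ) : ZMod n)) : ℤ))) := by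
      intro j hj1 hjG
      obtain ⟨ε, hεor, p, hpt, hend, hmid, hlb⟩ := hchain (y + ((j:ℕ) : ZMod n))
      rcases hεor with hε | hε
      · -- rightward
        subst hε
        right
        have hple : p ≤ G y - j := by
          by_contra hgt
          push_neg at hgt
          apply hmid (G y - j) hgt
          have hrw : y + ((j:ℕ):ZMod n) + 1 * (((G y - j : ℕ)) : ZMod n)
              = y + ((G y : ℕ) : ZMod n) := by
            push_cast [Nat.cast_sub (le_of_lt hjG)]
            ring
          rw [hrw]
          exact hGspec y
        have hpge : G y - j ≤ p := by
          by_contra hlt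
          push_neg at hlt
          apply hGmin y (j + p) (by omega) (by omega)
          have hrw : y + ((j:ℕ):ZMod n) + 1 * ((p:ℕ) : ZMod n)
              = y + (((j + p : ℕ)) : ZMod n) := by push_cast; ring
          rw [← hrw]
          exact hend
        intro δ hδj hδG
        have hi := hlb (δ - j) (by omega)
        have hrw : y + ((j:ℕ):ZMod n) + 1 * (((δ - j : ℕ)) : ZMod n)
            = y + ((δ:ℕ) : ZMod n) := by
          push_cast [Nat.cast_sub hδj]
          ring
        rw [hrw] at hi
        have hc : ((δ - j : ℕ) : ℤ) = (δ:ℤ) - j := by omega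
        omega
      · -- leftward
        subst hε
        left
        have hple : p ≤ j := by
          by_contra hgt
          push_neg at hgt
          apply hmid j hgt
          have hrw : y + ((j:ℕ):ZMod n) + (-1) * ((j:ℕ) : ZMod n) = y := by ring
          rw [hrw]
          exact hyval
        have hpge : j ≤ p := by
          by_contra hlt
          push_neg at hlt
          apply hGmin y (j - p) (by omega) (by omega)
          have hrw : y + ((j:ℕ):ZMod n) + (-1) * ((p:ℕ) : ZMod n)
              = y + (((j - p : ℕ)) : ZMod n) := by
            push_cast [Nat.cast_sub (le_of_lt hlt)]
            ring
          rw [← hrw]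
          exact hend
        intro δ hδ1 hδj
        have hi := hlb (j - δ) (by omega)
        have hrw : y + ((j:ℕ):ZMod n) + (-1) * (((j - δ : ℕ)) : ZMod n)
            = y + ((δ:ℕ) : ZMod n) := by
          push_cast [Nat.cast_sub hδj]
          ring
        rw [hrw] at hi
        have hc : ((j - δ : ℕ) : ℤ) = (j:ℤ) - δ := by omega
        omega
    -- extremal left / right indices
    have hpack : ∃ aN jBv : ℕ, aN ≤ G y - 1 ∧ jBv ≤ aN + 1 ∧
        (∀ δ : ℕ, 1 ≤ δ → δ ≤ G y - 1 → ((aN:ℤ) - (δ:ℤ) - (s:ℤ) ≤ (c' (y + ((δ:ℕ) : ZMod n)) : ℤ))) ∧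
        (∀ δ : ℕ, 1 ≤ δ → δ ≤ G y - 1 → ((δ:ℤ) - (jBv:ℤ) - (s:ℤ) ≤ (c' (y + ((δ:ℕ) : ZMod n)) : ℤ))) := by
      set P : ℕ → Prop := fun j => ∀ δ : ℕ, 1 ≤ δ → δ ≤ j →
          ((j:ℤ) - (δ:ℤ) - (s:ℤ) ≤ (c' (y + ((δ:ℕ) : ZMod n)) : ℤ)) with hP
      set Q : ℕ → Prop := fun j => ∀ δ : ℕ, j ≤ δ → δ ≤ G y - 1 →
          ((δ:ℤ) - (j:ℤ) - (s:ℤ) ≤ (c' (y + ((δ:ℕ) : ZMod n)) : ℤ)) with hQ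
      have hQGy : Q (G y) := by
        rw [hQ]
        intro δ h1 h2
        omega
      have hQex : ∃ j, Q j := ⟨G y, hQGy⟩
      refine ⟨Nat.findGreatest P (G y - 1), Nat.find hQex, Nat.findGreatest_le _, ?_, ?_, ?_⟩
      · -- coverage
        rcases Nat.lt_or_ge (Nat.findGreatest P (G y - 1) + 1) (G y) with hlt | hge
        · rcases hdich (Nat.findGreatest P (G y - 1) + 1) (by omega) hlt with hL | hR
          · exact absurd hL (Nat.findGreatest_is_greatest (P := P) (n := G y - 1)
              (k := Nat.findGreatest P (G y - 1) + 1) (by omega) (by omega))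
          · exact Nat.find_le hR
        · have hfle : Nat.find hQex ≤ G y := Nat.find_le hQGy
          omega
      · -- left tent
        intro δ h1δ h2δ
        have hge0 : (0:ℤ) ≤ (c' (y + ((δ:ℕ) : ZMod n)) : ℤ) := Int.natCast_nonneg _
        rcases Nat.eq_zero_or_pos (Nat.findGreatest P (G y - 1)) with h0 | hpos
        · rw [h0]
          push_cast
          omega
        · have hPa : P (Nat.findGreatest P (G y - 1)) :=
            Nat.findGreatest_of_ne_zero rfl (by omega)
          rcases le_or_gt δ (Nat.findGreatest P (G y - 1)) with hd | hd
          · exact hPa δ h1δ hd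
          · push_cast
            omega
      · -- right tent
        intro δ h1δ h2δ
        have hge0 : (0:ℤ) ≤ (c' (y + ((δ:ℕ) : ZMod n)) : ℤ) := Int.natCast_nonneg _
        have hQj : Q (Nat.find hQex) := Nat.find_spec hQex
        rcases le_or_gt (Nat.find hQex) δ with hd | hd
        · exact hQj δ hd h2δ
        · push_cast
          omega
    obtain ⟨aN, jB, haN_le, hcov, haN_tent, hjB_tent⟩ := hpack
    -- primed parameters
    set a' := min aN (G y - 1) with ha'
    set b' := G y - 1 - a' with hb'
    have hGyab : G y = a' + b' + 1 := by omega
    -- pointwise bound on the interior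
    have hpw : ∀ i ∈ range (G y - 1),
        ((a' - s) - (i+1)) + ((i+1) - (a'+s+1)) ≤ c' (y + (((i+1 : ℕ)) : ZMod n)) := by
      intro i hi
      simp only [mem_range] at hi
      have hA := haN_tent (i+1) (by omega) (by omega)
      have hB := hjB_tent (i+1) (by omega) (by omega)
      omega
    have hsumle : ∑ i ∈ range (G y - 1), (((a' - s) - (i+1)) + ((i+1) - (a'+s+1)))
        ≤ ∑ i ∈ range (G y - 1), c' (y + (((i+1 : ℕ)) : ZMod n)) := Finset.sum_le_sum hpw
    rw [Finset.sum_add_distrib] at hsumle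
    -- closed forms
    have hTA : 2 * ∑ i ∈ range (G y - 1), ((a'-s) - (i+1)) = (a'-s)*((a'-s)-1) :=
      sumHA _ _ (by omega)
    have hTB : 2 * ∑ i ∈ range (G y - 1), ((i+1) - (a'+s+1))
        = ((G y - 1) - (a'+s+1)) * (((G y - 1) - (a'+s+1)) + 1) := sumHB _ _
    have hTBeq : ((G y - 1) - (a'+s+1)) * (((G y - 1) - (a'+s+1)) + 1)
        = (b'-s)*((b'-s)-1) := by
      rcases Nat.eq_zero_or_pos (b' - s) with h0 | hpos
      · have hz1 : (G y - 1) - (a'+s+1) = 0 := by omega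
        rw [h0, hz1]
      · have hw : (G y - 1) - (a'+s+1) = (b'-s) - 1 := by omega
        have hw1 : (b'-s) - 1 + 1 = b'-s := by omega
        rw [hw, hw1, Nat.mul_comm]
    rw [hTBeq] at hTB
    have hFIN := arithFIN k s L hk h1 h2 a' b'
    -- peel the seed term
    have hsum1 : ∑ j ∈ range (G y), c' (y + ((j:ℕ) : ZMod n))
        = (∑ i ∈ range (G y - 1), c' (y + (((i+1:ℕ)) : ZMod n))) + (k-1) := by
      have hGsplit : G y = (G y - 1) + 1 := by omega
      rw [hGsplit, Finset.sum_range_succ']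
      congr 1
      simpa using hyval
    calc 2 * ((k-1) + L*(L+1)) * G y
        = 2*(a'+b'+1)*((k-1) + L*(L+1)) := by rw [← hGyab]; ring
      _ ≤ 2*((2*L+2*s+3)*(k-1)) + (2*L+2*s+3)*((a'-s)*((a'-s)-1))
          + (2*L+2*s+3)*((b'-s)*((b'-s)-1)) := hFIN
      _ = 2*((2*L+2*s+3)*(k-1))
          + (2*L+2*s+3)*(2 * ∑ i ∈ range (G y - 1), ((a'-s) - (i+1)))
          + (2*L+2*s+3)*(2 * ∑ i ∈ range (G y - 1), ((i+1) - (a'+s+1))) := by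
            rw [hTA, hTB]
      _ = 2*(2*L+2*s+3)*((∑ i ∈ range (G y - 1), ((a'-s) - (i+1))
          + ∑ i ∈ range (G y - 1), ((i+1) - (a'+s+1))) + (k-1)) := by ring
      _ ≤ 2*(2*L+2*s+3)*((∑ i ∈ range (G y - 1), c' (y + (((i+1:ℕ)) : ZMod n))) + (k-1)) := by
            apply Nat.mul_le_mul_left
            omega
      _ = 2 * (2*L+2*s+3) * ∑ j ∈ range (G y), c' (y + ((j:ℕ) : ZMod n)) := by
            rw [hsum1]

  calc 2 * ((k-1) + L*(L+1)) * n = ∑ y ∈ S, 2 * ((k-1) + L*(L+1)) * G y := by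
        rw [← Finset.mul_sum, hcard]
    _ ≤ ∑ y ∈ S, 2 * (2*L+2*s+3) * ∑ j ∈ range (G y), c' (y + ((j:ℕ) : ZMod n)) :=
        Finset.sum_le_sum hgap
    _ = 2 * (2*L+2*s+3) * ∑ v, c' v := by rw [← Finset.mul_sum, hgroup]

end lower

section assembly
open Finset

lemma sqrt_char (k σ : ℕ) (hk : 2 ≤ k) :
    (Nat.sqrt ((σ+1)*(σ+1) + (k-1)) - (σ+1)) * ((Nat.sqrt ((σ+1)*(σ+1) + (k-1)) - (σ+1)) + 2*σ + 2) ≤ k - 1 ∧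
    k ≤ ((Nat.sqrt ((σ+1)*(σ+1) + (k-1)) - (σ+1)) + 1) * ((Nat.sqrt ((σ+1)*(σ+1) + (k-1)) - (σ+1)) + 2*σ + 3) := by
  set W := (σ+1)*(σ+1) + (k-1) with hW
  set r := Nat.sqrt W with hr
  have hr1 : r * r ≤ W := by
    have := Nat.sqrt_le' W
    rw [pow_two] at this
    exact this
  have hr2 : W < (r+1) * (r+1) := by
    have := Nat.lt_succ_sqrt' W
    rw [Nat.succ_eq_add_one, pow_two] at this
    exact this
  have hrge : σ + 1 ≤ r := by
    rw [hr, Nat.le_sqrt']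
    rw [pow_two]
    omega
  obtain ⟨Lσ, hLσ⟩ : ∃ Lσ, r = Lσ + (σ + 1) := ⟨r - (σ+1), by omega⟩
  have hsub : r - (σ+1) = Lσ := by omega
  rw [hsub]
  rw [hLσ] at hr1 hr2
  constructor
  · have hexp : (Lσ + (σ+1)) * (Lσ + (σ+1)) = Lσ*(Lσ+2*σ+2) + (σ+1)*(σ+1) := by ring
    omega
  · have hexp : (Lσ + (σ+1) + 1) * (Lσ + (σ+1) + 1) = (Lσ+1)*(Lσ+2*σ+3) + (σ+1)*(σ+1) := by ring
    omega

theorem stmt13' (n k t : ℕ) [NeZero n] (hn : 3 ≤ n) (hk : 2 ≤ k) (htk : k - 1 ≤ t) :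
    let s : ℕ := t - k + 1
    let L : ℕ := Nat.sqrt (t + 1 + s ^ 2 + s) - (s + 1)
    let m : ℕ := 2 * L + 2 * s + 3
    let X : ZMod n → ℤ := fun v =>
      let j : ℤ := (v.val : ℤ) % (m : ℤ)
      if j = 0 then (k : ℤ) - 1
      else if j ≤ (L : ℤ) + (s : ℤ) + 1 then (L : ℤ) + 1 - j
      else j - (L : ℤ) - 2 * (s : ℤ) - 2
    let c : ZMod n → ℕ := fun v => (X v).toNat
    (∑ v, c v ≤ ((n + m - 1) / m) * (k - 1 + L * (L + 1))) ∧
    (m ∣ n →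
      (∑ v, c v = (n / m) * (k - 1 + L * (L + 1))) ∧
      ∀ c' : ZMod n → ℕ, (∀ v, c' v ≤ k - 1) →
        (∀ v, (step (ringGraph n) (1/2))^[t] c' v = k - 1) →
        ∑ v, c v ≤ ∑ v, c' v) := by
  intro s L m X c
  have hs : s = t - k + 1 := rfl
  have hLdef : L = Nat.sqrt (t + 1 + s ^ 2 + s) - (s + 1) := rfl
  have hmdef : m = 2 * L + 2 * s + 3 := rfl
  have hm0 : 0 < m := by omega
  -- pointwise identification of c with patt
  have hcval : ∀ i, i < n → c ((i : ℕ) : ZMod n) = patt k s L (i % m) := by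
    intro i hi
    show (X ((i : ℕ) : ZMod n)).toNat = patt k s L (i % m)
    have hval : ((i : ℕ) : ZMod n).val = i := ZMod.val_natCast_of_lt hi
    simp only [X, hval]
    have hmod : ((i:ℕ) : ℤ) % (m : ℤ) = ((i % m : ℕ) : ℤ) := (Int.natCast_mod i m).symm
    rw [hmod, patt]
    split_ifs <;> omega
  have hsum : ∑ v, c v = ∑ i ∈ range n, patt k s L (i % m) := by
    rw [sumZMod n c]
    apply Finset.sum_congr rfl
    intro i hi
    simp only [mem_range] at hi
    exact hcval i hi
  refine ⟨?_, ?_⟩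
  · -- part 1
    rw [hsum]
    calc ∑ i ∈ range n, patt k s L (i % m)
        ≤ ((n + m - 1)/m) * ∑ j ∈ range m, patt k s L j := sum_mod_le _ _ _ hm0
      _ = ((n + m - 1)/m) * (k - 1 + L * (L + 1)) := by rw [patt_sum]
  · intro hdvd
    have hsum2 : ∑ v, c v = (n / m) * (k - 1 + L * (L + 1)) := by
      rw [hsum]
      have hnm : n = m * (n / m) := (Nat.mul_div_cancel' hdvd).symm
      rw [hnm, sumPER, patt_sum]
      rw [← hnm]
    refine ⟨hsum2, ?_⟩
    intro c' hle hdyn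
    -- corrected parameters
    set σs : ℕ := t - (k - 1) with hσs
    set Lσ : ℕ := Nat.sqrt ((σs+1)*(σs+1) + (k-1)) - (σs+1) with hLσ
    obtain ⟨hσ1, hσ2⟩ := sqrt_char k σs hk
    have hlow := lower_bound (n := n) (k := k) (t := t) (s := σs) (L := Lσ)
      hn hk htk (by omega) hσ1 hσ2 hle hdyn
    -- compare (s,L,m) with (σs,Lσ,mσ)
    have hcmp : ((k-1) + L*(L+1)) * (2*Lσ+2*σs+3) ≤ ((k-1) + Lσ*(Lσ+1)) * m := by
      rcases Nat.lt_or_ge t k with htlt | htge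
      · -- edge case t = k - 1
        have ht' : t + 1 = k := by omega
        have hsval : s = 1 := by omega
        have hσval : σs = 0 := by omega
        -- L = sqrt(k+2) - 2, Lσ = sqrt k - 1
        have harg : t + 1 + s^2 + s = k + 2 := by
          rw [hsval]
          norm_num
          omega
        have hLval : L = Nat.sqrt (k + 2) - 2 := by
          rw [hLdef, harg, hsval]
        have hLσval : Lσ = Nat.sqrt k - 1 := by
          rw [hLσ, hσval, show (0+1)*(0+1) + (k-1) = k from by omega]
        set u := Nat.sqrt k with hu
        set w := Nat.sqrt (k + 2) with hw
        have hu1 : u * u ≤ k := by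
          have := Nat.sqrt_le' k
          rwa [pow_two] at this
        have hu2 : k < (u+1)*(u+1) := by
          have := Nat.lt_succ_sqrt' k
          rwa [Nat.succ_eq_add_one, pow_two] at this
        have hw1 : w * w ≤ k + 2 := by
          have := Nat.sqrt_le' (k+2)
          rwa [pow_two] at this
        have hw2 : k + 2 < (w+1)*(w+1) := by
          have := Nat.lt_succ_sqrt' (k+2)
          rwa [Nat.succ_eq_add_one, pow_two] at this
        have huge : 1 ≤ u := by
          rw [hu, Nat.le_sqrt', pow_two]
          omega
        have hwu : u ≤ w := by
          rw [hu, hw]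
          exact Nat.sqrt_le_sqrt (by omega)
        have hwu2 : w ≤ u + 1 := by
          have : k + 2 < (u+2)*(u+2) := by nlinarith
          by_contra hcon
          push_neg at hcon
          have : (u+2)*(u+2) ≤ w * w := Nat.mul_le_mul (by omega) (by omega)
          omega
        have hmval : m = 2*L + 5 := by omega
        have hwge : 2 ≤ w := by
          rw [hw, Nat.le_sqrt', pow_two]
          omega
        rcases Nat.eq_or_lt_of_le hwu with heq | hlt2
        · -- w = u : L = u - 2, Lσ = u - 1, m = 2u+1 = mσ
          have hLu : L = u - 2 := by omega
          have hLσu : Lσ = u - 1 := by omega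
          have hD : L*(L+1) ≤ Lσ*(Lσ+1) :=
            Nat.mul_le_mul (show L ≤ Lσ by omega) (show L + 1 ≤ Lσ + 1 by omega)
          have hmm : 2*Lσ + 2*σs + 3 = m := by omega
          rw [hmm]
          exact Nat.mul_le_mul_right _ (by omega)
        · -- w = u + 1 : L = u - 1 = Lσ, m = mσ + 2
          have hLeq2 : L = Lσ := by omega
          rw [hLeq2]
          exact Nat.mul_le_mul le_rfl (by omega)
      · -- normal case t ≥ k
        have hseq : s = σs := by omega
        have hLeq : L = Lσ := by
          have harg : t + 1 + s ^ 2 + s = (σs+1)*(σs+1) + (k-1) := by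
            rw [hseq, pow_two]
            have ht1 : t + 1 = σs + k := by omega
            have hexp : (σs+1)*(σs+1) = σs*σs + 2*σs + 1 := by ring
            omega
          rw [hLdef, hLσ, harg, hseq]
        have hmeq : 2*Lσ + 2*σs + 3 = m := by omega
        rw [hmeq, hLeq]
    -- conclude
    have hscm : m * ∑ v, c v = n * ((k-1) + L*(L+1)) := by
      rw [hsum2]
      have hnm : n = m * (n / m) := (Nat.mul_div_cancel' hdvd).symm
      calc m * ((n / m) * (k - 1 + L * (L + 1))) = (m * (n/m)) * (k - 1 + L*(L+1)) := by ring
        _ = n * ((k-1) + L*(L+1)) := by rw [← hnm]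
    have hmσ0 : 0 < 2*Lσ+2*σs+3 := by omega
    refine Nat.le_of_mul_le_mul_left ?_ (show 0 < 2 * m * (2*Lσ+2*σs+3) by positivity)
    calc 2 * m * (2*Lσ+2*σs+3) * ∑ v, c v
        = 2 * (2*Lσ+2*σs+3) * (m * ∑ v, c v) := by ring
      _ = 2 * (2*Lσ+2*σs+3) * (n * ((k-1) + L*(L+1))) := by rw [hscm]
      _ = 2 * n * (((k-1) + L*(L+1)) * (2*Lσ+2*σs+3)) := by ring
      _ ≤ 2 * n * (((k-1) + Lσ*(Lσ+1)) * m) := Nat.mul_le_mul_left _ hcmp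
      _ = m * (2 * ((k-1) + Lσ*(Lσ+1)) * n) := by ring
      _ ≤ m * (2 * (2*Lσ+2*σs+3) * ∑ v, c' v) := Nat.mul_le_mul_left _ hlow
      _ = 2 * m * (2*Lσ+2*σs+3) * ∑ v, c' v := by ring

end assembly

/-- Theorem 4(ii) and Corollary 2, case t ≥ k−1: the weight of
C(R_n,k,t) is at most ⌈n/(2ℓ+2s+3)⌉·(k−1+ℓ(ℓ+1)); and when (2ℓ+2s+3) ∣ n it equals
n(k−1+ℓ(ℓ+1))/(2ℓ+2s+3), in which case C(R_n,k,t) is an optimal (k,t)-dynamo. -/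
theorem stmt13 (n k t : ℕ) [NeZero n] (hn : 3 ≤ n) (hk : 2 ≤ k) (htk : k - 1 ≤ t) :
    let s : ℕ := t - k + 1
    let L : ℕ := Nat.sqrt (t + 1 + s ^ 2 + s) - (s + 1)
    let m : ℕ := 2 * L + 2 * s + 3
    let X : ZMod n → ℤ := fun v =>
      let j : ℤ := (v.val : ℤ) % (m : ℤ)
      if j = 0 then (k : ℤ) - 1
      else if j ≤ (L : ℤ) + (s : ℤ) + 1 then (L : ℤ) + 1 - j
      else j - (L : ℤ) - 2 * (s : ℤ) - 2
    let c : ZMod n → ℕ := fun v => (X v).toNat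
    (∑ v, c v ≤ ((n + m - 1) / m) * (k - 1 + L * (L + 1))) ∧
    (m ∣ n →
      (∑ v, c v = (n / m) * (k - 1 + L * (L + 1))) ∧
      ∀ c' : ZMod n → ℕ, (∀ v, c' v ≤ k - 1) →
        (∀ v, (step (ringGraph n) (1/2))^[t] c' v = k - 1) →
        ∑ v, c v ≤ ∑ v, c' v) :=
  stmt13' n k t hn hk htk
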